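/- Let G be a group and H a finite-index subgroup of G. Let H̄ denote the closure of ι(H) in the profinite completion Ĝ, where ι : G → Ĝ is the canonical homomorphism. Then H̄ is isomorphic, as a topological group, to the profinite completion Ĥ of H. -/

import Mathlib

universe u v

namespace ProfinitePaper

variable (G : Type u) [Group G]

/-- The finite-index normal subgroups of `G`, indexing the finite quotients. -/
abbrev FinNormal : Type u := {N : Subgroup G // N.Normal ∧ N.FiniteIndex}

variable {G} in
instance (N : FinNormal G) : N.1.Normal := N.2.1

variable {G} in
instance (N : FinNormal G) : N.1.FiniteIndex := N.2.2

/-- Each finite quotient carries the discrete topology. -/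
instance (N : FinNormal G) : TopologicalSpace (G ⧸ N.1) := ⊥

instance (N : FinNormal G) : DiscreteTopology (G ⧸ N.1) := ⟨rfl⟩

instance (N : FinNormal G) : IsTopologicalGroup (G ⧸ N.1) where
  continuous_mul := continuous_of_discreteTopology
  continuous_inv := continuous_of_discreteTopology

/-- The profinite completion of `G`, as the inverse limit (compatible families)
inside the product of all finite quotients of `G`. -/
def profiniteCompletionSubgroup : Subgroup (∀ N : FinNormal G, G ⧸ N.1) where
  carrier := {x | ∀ (N M : FinNormal G) (h : N.1 ≤ M.1),
    QuotientGroup.map N.1 M.1 (MonoidHom.id G) (fun _ hx => h hx) (x N) = x M}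
  one_mem' := fun N M h => by simp
  mul_mem' := fun {x y} hx hy N M h => by
    simp only [Pi.mul_apply, map_mul, hx N M h, hy N M h]
  inv_mem' := fun {x} hx N M h => by
    simp only [Pi.inv_apply, map_inv, hx N M h]

/-- The profinite completion `Ĝ` of `G`, regarded as a topological group: it is the
inverse limit of the discrete finite quotients `G/N`, a compact, Hausdorff, totally
disconnected topological group (with the subspace topology from the product of the
discrete finite quotients). -/
abbrev ProfiniteCompletion : Type u := profiniteCompletionSubgroup G

/-- The canonical homomorphism `ι : G → Ĝ`, induced by the quotient maps `G → G/N`. -/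
def iota : G →* ProfiniteCompletion G :=
  MonoidHom.codRestrict (Pi.monoidHom fun N : FinNormal G => QuotientGroup.mk' N.1)
    (profiniteCompletionSubgroup G)
    (fun g N M h => by rfl)

-- ==================== auxiliary development ====================

variable {G}

/-- Restriction of a finite-index normal subgroup of `G` to a subgroup `H`. -/
def res (H : Subgroup G) (N : FinNormal G) : FinNormal H :=
  ⟨N.1.subgroupOf H, inferInstance, inferInstance⟩

/-- The induced injection of quotients `H/(N ∩ H) →* G/N`. -/
def qmap (H : Subgroup G) (N : FinNormal G) : H ⧸ (res H N).1 →* G ⧸ N.1 :=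
  QuotientGroup.map _ _ H.subtype (fun _ hx => hx)

lemma qmap_mk (H : Subgroup G) (N : FinNormal G) (h : H) :
    qmap H N (QuotientGroup.mk h) = QuotientGroup.mk (h : G) := rfl

lemma qmap_injective (H : Subgroup G) (N : FinNormal G) :
    Function.Injective (qmap H N) := by
  intro a b
  induction a using QuotientGroup.induction_on with
  | H a =>
  induction b using QuotientGroup.induction_on with
  | H b =>
  intro h
  rw [qmap_mk, qmap_mk, QuotientGroup.eq] at h
  rw [QuotientGroup.eq]
  exact h


lemma qmap_compat (H : Subgroup G) {N M : FinNormal G} (h : N.1 ≤ M.1)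
    (y : H ⧸ (res H N).1) :
    QuotientGroup.map N.1 M.1 (MonoidHom.id G) (fun _ hx => h hx) (qmap H N y) =
      qmap H M (QuotientGroup.map (res H N).1 (res H M).1 (MonoidHom.id H)
        (fun _ hx => h hx) y) := by
  induction y using QuotientGroup.induction_on with
  | H a => rfl

/-- The natural map `Ĥ →* Ĝ`. -/
def phi (H : Subgroup G) : ProfiniteCompletion H →* ProfiniteCompletion G where
  toFun x := ⟨fun N => qmap H N (x.1 (res H N)), by
    intro N M h
    rw [qmap_compat H h, x.2 (res H N) (res H M) (fun _ hx => h hx)]⟩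
  map_one' := by
    ext N
    simp
  map_mul' x y := by
    ext N
    simp

lemma phi_injective (H : Subgroup G) (hH : H.FiniteIndex) :
    Function.Injective (phi H) := by
  haveI := hH
  intro x y hxy
  ext K
  -- reduce to a finite-index normal subgroup of G contained in K
  set K' : Subgroup G := K.1.map H.subtype with hK'
  haveI : K'.FiniteIndex := by
    constructor
    rw [hK', Subgroup.index_map_subtype]
    exact mul_ne_zero K.2.2.index_ne_zero hH.index_ne_zero
  set N : FinNormal G := ⟨K'.normalCore, inferInstance, inferInstance⟩ with hN
  have hle : (res H N).1 ≤ K.1 := by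
    intro a ha
    have : (a : G) ∈ K'.normalCore := ha
    have : (a : G) ∈ K' := K'.normalCore_le this
    rw [hK'] at this
    obtain ⟨b, hb, hba⟩ := this
    rwa [show b = a from Subtype.ext hba] at hb
  have hcomp : ∀ z : ProfiniteCompletion H,
      QuotientGroup.map (res H N).1 K.1 (MonoidHom.id H) (fun _ hx => hle hx)
        (z.1 (res H N)) = z.1 K := fun z => z.2 (res H N) K hle
  rw [← hcomp x, ← hcomp y]
  congr 1
  apply qmap_injective H N
  exact congrFun (congrArg Subtype.val hxy) N


lemma continuous_phi (H : Subgroup G) : Continuous (phi H) := by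
  apply Continuous.subtype_mk
  apply continuous_pi
  intro N
  exact continuous_of_discreteTopology.comp ((continuous_apply (res H N)).comp
    continuous_subtype_val)

variable (G) in
lemma finnormal_finset_inf (I : Finset (FinNormal G)) :
    (I.inf fun i => i.1).Normal ∧ (I.inf fun i => i.1).FiniteIndex := by
  classical
  induction I using Finset.induction_on with
  | empty => rw [Finset.inf_empty]; exact ⟨inferInstance, inferInstance⟩
  | insert a s hni ih =>
    rw [Finset.inf_insert]
    haveI := ih.1; haveI := ih.2
    exact ⟨inferInstance, inferInstance⟩

variable (G) in
lemma denseRange_iota : DenseRange (iota G) := by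
  rw [denseRange_iff_closure_range, Set.eq_univ_iff_forall]
  intro x
  rw [mem_closure_iff]
  intro U hU hxU
  obtain ⟨V, hV, rfl⟩ := isOpen_induced_iff.mp hU
  obtain ⟨I, u, hI, hsub⟩ := isOpen_pi_iff.mp hV x.1 hxU
  obtain ⟨h1, h2⟩ := finnormal_finset_inf G I
  set M : FinNormal G := ⟨I.inf fun i => i.1, h1, h2⟩ with hM
  obtain ⟨g, hg⟩ : ∃ g, (QuotientGroup.mk g : G ⧸ M.1) = x.1 M := Quot.exists_rep _
  refine ⟨iota G g, ?_, ⟨g, rfl⟩⟩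
  show (iota G g).1 ∈ V
  apply hsub
  intro i hi
  have hle : M.1 ≤ i.1 := Finset.inf_le hi
  have : (iota G g).1 i = x.1 i := by
    rw [← x.2 M i hle, ← hg]
    rfl
  rw [this]
  exact (hI i hi).2

variable (G) in
lemma isClosed_pc :
    IsClosed ((profiniteCompletionSubgroup G : Set (∀ N : FinNormal G, G ⧸ N.1))) := by
  have heq : (profiniteCompletionSubgroup G : Set (∀ N : FinNormal G, G ⧸ N.1)) =
      ⋂ (N : FinNormal G) (M : FinNormal G) (h : N.1 ≤ M.1),
        {x | QuotientGroup.map N.1 M.1 (MonoidHom.id G) (fun _ hx => h hx) (x N) = x M} := by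
    ext x
    simp only [Set.mem_iInter, Set.mem_setOf_eq]
    rfl
  rw [heq]
  exact isClosed_iInter fun N => isClosed_iInter fun M => isClosed_iInter fun h =>
    isClosed_eq (continuous_of_discreteTopology.comp (continuous_apply N))
      (continuous_apply M)

instance : CompactSpace (ProfiniteCompletion G) :=
  isCompact_iff_compactSpace.mp ((isClosed_pc G).isCompact)

lemma phi_iota (H : Subgroup G) (h : H) : phi H (iota H h) = iota G (h : G) := rfl


lemma range_phi (H : Subgroup G) (hH : H.FiniteIndex) :
    Set.range (phi H) = ((H.map (iota G)).topologicalClosure :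
      Set (ProfiniteCompletion G)) := by
  have himg : ⇑(phi H) '' Set.range (iota H) = ⇑(iota G) '' (H : Set G) := by
    rw [← Set.range_comp]
    have : ⇑(phi H) ∘ ⇑(iota H) = ⇑(iota G) ∘ Subtype.val := by
      funext h; exact phi_iota H h
    rw [this, Set.range_comp, Subtype.range_coe]
  have hcl : ((H.map (iota G)).topologicalClosure : Set (ProfiniteCompletion G)) =
      closure (⇑(iota G) '' (H : Set G)) := by
    rw [Subgroup.topologicalClosure_coe, Subgroup.coe_map]
  apply Set.eq_of_subset_of_subset
  · rintro _ ⟨x, rfl⟩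
    have hx : x ∈ closure (Set.range (iota H)) := by
      rw [denseRange_iff_closure_range.mp (denseRange_iota H)]
      trivial
    have := image_closure_subset_closure_image (continuous_phi H)
      (Set.mem_image_of_mem _ hx)
    rw [himg] at this
    rw [hcl]
    exact this
  · rw [hcl]
    apply closure_minimal
    · rintro _ ⟨g, hg, rfl⟩
      exact ⟨iota H ⟨g, hg⟩, rfl⟩
    · exact (isCompact_range (continuous_phi H)).isClosed


/-- For a finite-index subgroup `H ≤ G`, the closure of `ι(H)` in the
profinite completion `Ĝ` is isomorphic, as a topological group, to the profinite
completion `Ĥ` of `H`. -/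
theorem closure_iota_image_isomorphic_profiniteCompletion
    (G : Type u) [Group G] (H : Subgroup G) (hH : H.FiniteIndex) :
    ∃ e : (H.map (iota G)).topologicalClosure ≃* ProfiniteCompletion H,
      Continuous e ∧ Continuous e.symm := by
  set S := (H.map (iota G)).topologicalClosure with hS
  have hmem : ∀ x : ProfiniteCompletion H, phi H x ∈ S := by
    intro x
    have : phi H x ∈ Set.range (phi H) := ⟨x, rfl⟩
    rwa [range_phi H hH] at this
  set f : ProfiniteCompletion H →* S := (phi H).codRestrict S hmem with hf
  have hcont : Continuous f := (continuous_phi H).subtype_mk hmem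
  have hbij : Function.Bijective f := by
    constructor
    · intro a b hab
      exact phi_injective H hH (congrArg Subtype.val hab)
    · rintro ⟨y, hy⟩
      rw [← SetLike.mem_coe, ← range_phi H hH] at hy
      obtain ⟨x, hx⟩ := hy
      exact ⟨x, Subtype.ext hx⟩
  set e' : ProfiniteCompletion H ≃* S := MulEquiv.ofBijective f hbij with he'
  have hconte' : Continuous e' := hcont
  refine ⟨e'.symm, ?_, hconte'⟩
  have hsymm : Continuous ⇑e'.toEquiv.symm :=
    Continuous.continuous_symm_of_equiv_compact_to_t2 (f := e'.toEquiv) hconte'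
  have hfun : ⇑e'.symm = ⇑e'.toEquiv.symm := rfl
  rw [hfun]
  exact hsymm

end ProfinitePaper
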